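/- arXiv:1406.4645 — 4 statements merged into one kernel-verified Lean document; each statement's English description precedes it below -/
import Mathlib

section
/- For any unital *-algebra A with closed trace 𝔱 (𝔱∘δ = 0 for a derivation δ with 𝔱(ab)=𝔱(ba)) and positive invertible k ∈ A, the quantity 𝔱(−4k⁻²δ(k)k⁻¹δ(k) + 2k⁻²δδ(k)) vanishes. -/
/-- For any unital algebra `A` with a closed trace `𝔱` (`𝔱∘δ = 0` for a derivation
`δ`, `𝔱(ab) = 𝔱(ba)`) and invertible `k ∈ A`, the algebraic Gauss–Bonnet
functional `𝔱(−4 k⁻² δ(k) k⁻¹ δ(k) + 2 k⁻² δδ(k))` vanishes. -/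
theorem algebraic_gauss_bonnet {A : Type*} [Ring A] [StarRing A]
    [PartialOrder A] [StarOrderedRing A] [Algebra ℂ A] (𝔱 : A →ₗ[ℂ] ℂ)
    (htr : ∀ a b : A, 𝔱 (a * b) = 𝔱 (b * a))
    (δ : A →ₗ[ℂ] A) (hLeib : ∀ a b : A, δ (a * b) = δ a * b + a * δ b)
    (hclosed : ∀ a : A, 𝔱 (δ a) = 0)
    (k : Aˣ) (hk : 0 ≤ (k : A)) :
    𝔱 (-(4 : A) * (↑(k ^ 2)⁻¹ * δ ↑k * ↑k⁻¹ * δ ↑k)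
        + (2 : A) * (↑(k ^ 2)⁻¹ * δ (δ ↑k))) = 0 := by
  set u : A := ((k⁻¹ : Aˣ) : A) with hu
  set a : A := δ ↑k with ha
  set b : A := δ (δ ↑k) with hb
  -- δ 1 = 0
  have hone : δ 1 = 0 := by
    have h := hLeib 1 1
    rw [mul_one, one_mul, mul_one] at h
    exact (left_eq_add.mp h)
  -- derivative of the inverse
  have hδu : δ u = -(u * (a * u)) := by
    have h0 : δ ((k : A) * u) = 0 := by
      rw [hu, Units.mul_inv]; exact hone
    rw [hLeib] at h0
    have h1 : (k : A) * δ u = -(a * u) := by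
      rw [← ha] at h0
      exact eq_neg_of_add_eq_zero_right h0
    have := congrArg (fun x => u * x) h1
    simpa [hu, mul_assoc, ← mul_assoc, Units.inv_mul] using this
  -- (k^2)⁻¹ = u * u
  have hw : ((((k ^ 2)⁻¹ : Aˣ)) : A) = u * u := by
    rw [show (k ^ 2)⁻¹ = k⁻¹ * k⁻¹ by rw [sq, mul_inv_rev], Units.val_mul]
  rw [hw]
  -- closedness applied to u * a * u
  have h1 : 𝔱 (δ (u * a * u)) = 0 := hclosed _
  have hexp : δ (u * a * u) =
      -(u * (a * (u * (a * u)))) + u * (b * u) + -(u * (a * (u * (a * u)))) := by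
    rw [hLeib, hLeib, hδu, ← hb]
    noncomm_ring
  rw [hexp] at h1
  simp only [map_add, map_neg] at h1
  -- cyclicity
  have c1 := htr (u * a * (u * a)) u
  have c2 := htr (u * b) u
  simp only [mul_assoc] at c1 c2
  -- scalars
  have s1 : ∀ x : A, -(4 : A) * x = ((-4 : ℂ)) • x := by
    intro x
    rw [Algebra.smul_def, map_neg, map_ofNat]
  have s2 : ∀ x : A, (2 : A) * x = ((2 : ℂ)) • x := by
    intro x
    rw [Algebra.smul_def, map_ofNat]
  rw [s1, s2, map_add, map_smul, map_smul, smul_eq_mul, smul_eq_mul]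
  simp only [mul_assoc] at *
  linear_combination (2 : ℂ) * h1 + 4 * c1 - 2 * c2
end

section
/- For k a smooth positive function of one variable, ∫_{ℝ²} b₂(ξ) dξ₁dξ₂ = −(π/3)(δ₁k)²/k³ + (π/6)(δ₁₁k)/k², where b₂(ξ) is the commutative (θ=0) symbol given by b₂ = 48b₀⁵k⁶(δ₂k)²ξ₂⁶ + 48b₀⁵k²(δ₁k)²ξ₁²ξ₂⁴ − 8b₀⁴k⁵(δ₂₂k)ξ₂⁴ − 56b₀⁴k⁴(δ₂k)²ξ₂⁴ − 8b₀⁴k²(δ₁k)²ξ₂⁴ − 8b₀⁴k(δ₁₁k)ξ₁²ξ₂² − 8b₀⁴(δ₁k)²ξ₁²ξ₂² + 6b₀³k³(δ₂₂k)ξ₂² + 14b₀³k²(δ₂k)²ξ₂² + 2b₀³k(δ₁₁k)ξ₂² + b₀³(δ₁k)²ξ₂² − (1/2)b₀²k(δ₂₂k) − (1/4)b₀²(δ₂k)², with b₀ = (1 + ξ₁² + k²ξ₂²)⁻¹. -/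
/-!
Substituting `ξ₂ = t √(1 + ξ₁²) / k` in the inner integral of Fubini turns each monomial
`ξ₁^(2a) ξ₂^(2b) b₀ⁿ` of `b₂` into `k^(-(2b+1))` times a product of one-variable moments
`M(a, s) = ∫ x^(2a) (1 + x²)^(-s) dx` (`evenMoment a s`), one at `s = n` and one at the
half-integer `s = n - b - 1/2`. Integration by parts gives `2s M(a+1, s+1) = (2a+1) M(a, s)`,
and `x² = (1 + x²) - 1` gives `M(a+1, s+1) = M(a, s) - M(a, s+1)`; from `M(0, 1) = π` and
`M(0, 3/2) = 2` these produce every moment that occurs.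
-/

open Real MeasureTheory

/-- `b₀(ξ₁,ξ₂) = (1 + ξ₁² + k²ξ₂²)⁻¹`. -/
noncomputable def b0 (k ξ1 ξ2 : ℝ) : ℝ := (1 + ξ1 ^ 2 + k ^ 2 * ξ2 ^ 2)⁻¹

open Filter Topology

noncomputable def evenMoment (a : ℕ) (s : ℝ) : ℝ :=
  ∫ x : ℝ, (x ^ 2) ^ a * (1 + x ^ 2) ^ (-s)

lemma integrable_evenMoment {a : ℕ} {s : ℝ} (h : a + 1 / 2 < s) :
    Integrable fun x : ℝ => (x ^ 2) ^ a * (1 + x ^ 2) ^ (-s) := by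
  have hdom : Integrable fun x : ℝ => (1 + ‖x‖ ^ 2) ^ (-(2 * (s - a)) / 2) :=
    integrable_rpow_neg_one_add_norm_sq (by simp; linarith)
  refine hdom.mono' (by fun_prop) (.of_forall fun x => ?_)
  have hpos : 0 < 1 + x ^ 2 := by positivity
  rw [Real.norm_of_nonneg (by positivity), Real.norm_eq_abs, sq_abs,
    show -(2 * (s - a)) / 2 = a + -s by ring, rpow_add hpos, rpow_natCast]
  gcongr
  linarith

lemma hasDerivAt_pow_mul_one_add_sq_rpow_neg (a : ℕ) (s x : ℝ) :
    HasDerivAt (fun x : ℝ => x ^ (2 * a + 1) * (1 + x ^ 2) ^ (-s))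
      ((2 * a + 1) * ((x ^ 2) ^ a * (1 + x ^ 2) ^ (-s))
        - 2 * s * ((x ^ 2) ^ (a + 1) * (1 + x ^ 2) ^ (-(s + 1)))) x := by
  have hpos : 0 < 1 + x ^ 2 := by positivity
  have h := (hasDerivAt_pow (2 * a + 1) x).mul
    (((hasDerivAt_pow 2 x).const_add 1).rpow_const (p := -s) (.inl hpos.ne'))
  refine h.congr_deriv ?_
  rw [show -s - 1 = -(s + 1) by ring]
  push_cast
  ring

lemma tendsto_pow_mul_one_add_sq_rpow_neg {a : ℕ} {s : ℝ} (h : a + 1 / 2 < s) :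
    Tendsto (fun x : ℝ => x ^ (2 * a + 1) * (1 + x ^ 2) ^ (-s)) (cocompact ℝ) (𝓝 0) := by
  have hsq : Tendsto (fun x : ℝ => 1 + x ^ 2) (cocompact ℝ) atTop := by
    refine tendsto_atTop_add_const_left _ _ ?_
    simpa only [Function.comp_def, Real.norm_eq_abs, sq_abs] using
      (tendsto_pow_atTop two_ne_zero).comp (tendsto_norm_cocompact_atTop (E := ℝ))
  refine squeeze_zero_norm (fun x => ?_)
    ((tendsto_rpow_neg_atTop (y := s - (2 * a + 1) / 2) (by linarith)).comp hsq)
  have hpos : 0 < 1 + x ^ 2 := by positivity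
  rw [norm_mul, norm_pow, Real.norm_eq_abs, Real.norm_of_nonneg (by positivity),
    Function.comp_apply, show -(s - (2 * a + 1) / 2) = (1 / 2) * (2 * a + 1 : ℕ) + -s by
      push_cast; ring, rpow_add hpos, rpow_mul hpos.le, rpow_natCast, ← sqrt_eq_rpow]
  gcongr
  exact Real.abs_le_sqrt (by linarith)

lemma one_add_sq_rpow_neg_eq_mul (s x : ℝ) :
    (1 + x ^ 2) ^ (-s) = (1 + x ^ 2) ^ (-(s + 1)) * (1 + x ^ 2) := by
  rw [← rpow_add_one (by positivity)]
  ring_nf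

lemma evenMoment_succ_add_one_eq_sub {a : ℕ} {s : ℝ} (h : a + 1 / 2 < s) :
    evenMoment (a + 1) (s + 1) = evenMoment a s - evenMoment a (s + 1) := by
  rw [evenMoment, evenMoment, evenMoment, ← integral_sub (integrable_evenMoment h)
    (integrable_evenMoment (by linarith))]
  congr 1 with x
  rw [one_add_sq_rpow_neg_eq_mul s x]
  ring

lemma evenMoment_succ_add_one {a : ℕ} {s : ℝ} (h : a + 1 / 2 < s) :
    2 * s * evenMoment (a + 1) (s + 1) = (2 * a + 1) * evenMoment a s := by
  have hI := (integrable_evenMoment h).const_mul (2 * a + 1)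
  have hI' := (integrable_evenMoment (a := a + 1) (s := s + 1) (by push_cast; linarith)).const_mul
    (2 * s)
  have hFTC := integral_of_hasDerivAt_of_tendsto (hasDerivAt_pow_mul_one_add_sq_rpow_neg a s)
    (hI.sub hI') ((tendsto_pow_mul_one_add_sq_rpow_neg h).mono_left atBot_le_cocompact)
    ((tendsto_pow_mul_one_add_sq_rpow_neg h).mono_left atTop_le_cocompact)
  rw [integral_sub hI hI', integral_const_mul, integral_const_mul] at hFTC
  rw [evenMoment, evenMoment]
  linarith

lemma evenMoment_zero_add_one {s : ℝ} (hs : 1 / 2 < s) :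
    2 * s * evenMoment 0 (s + 1) = (2 * s - 1) * evenMoment 0 s := by
  have h : ((0 : ℕ) : ℝ) + 1 / 2 < s := by simpa using hs
  have := evenMoment_succ_add_one h
  rw [evenMoment_succ_add_one_eq_sub h] at this
  push_cast at this
  linarith

lemma tendsto_mul_one_add_sq_rpow_neg_half_atTop :
    Tendsto (fun x : ℝ => x * (1 + x ^ 2) ^ (-(1 / 2 : ℝ))) atTop (𝓝 1) := by
  have hcont : Tendsto (fun y : ℝ => (1 + y ^ 2) ^ (-(1 / 2 : ℝ))) (𝓝 0) (𝓝 1) := by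
    have : Continuous fun y : ℝ => (1 + y ^ 2) ^ (-(1 / 2 : ℝ)) :=
      (continuous_const.add (continuous_pow 2)).rpow_const
        fun y => .inl (by positivity : (1 : ℝ) + y ^ 2 ≠ 0)
    simpa using this.tendsto 0
  refine (hcont.comp tendsto_inv_atTop_zero).congr' ?_
  filter_upwards [eventually_gt_atTop 0] with x hx
  have hfactor : 1 + x ^ 2 = x ^ 2 * (1 + x⁻¹ ^ 2) := by field_simp; ring
  rw [Function.comp_apply, hfactor, mul_rpow (by positivity) (by positivity),
    rpow_neg (sq_nonneg x), ← sqrt_eq_rpow, sqrt_sq hx.le, ← mul_assoc,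
    mul_inv_cancel₀ hx.ne', one_mul]

lemma tendsto_mul_one_add_sq_rpow_neg_half_atBot :
    Tendsto (fun x : ℝ => x * (1 + x ^ 2) ^ (-(1 / 2 : ℝ))) atBot (𝓝 (-1)) := by
  refine ((tendsto_mul_one_add_sq_rpow_neg_half_atTop.comp tendsto_neg_atBot_atTop).neg).congr
    fun x => ?_
  simp only [Function.comp_apply, neg_sq, neg_mul, neg_neg]

lemma evenMoment_zero_three_halves : evenMoment 0 (3 / 2) = 2 := by
  have hderiv (x : ℝ) : HasDerivAt (fun x : ℝ => x * (1 + x ^ 2) ^ (-(1 / 2 : ℝ)))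
      ((1 + x ^ 2) ^ (-(3 / 2 : ℝ))) x := by
    convert hasDerivAt_pow_mul_one_add_sq_rpow_neg 0 (1 / 2) x using 1
    · simp
    · rw [one_add_sq_rpow_neg_eq_mul (1 / 2)]
      norm_num
      ring
  have hI := integrable_evenMoment (a := 0) (s := 3 / 2) (by norm_num)
  simp only [pow_zero, one_mul] at hI
  have hFTC := integral_of_hasDerivAt_of_tendsto hderiv hI
    tendsto_mul_one_add_sq_rpow_neg_half_atBot tendsto_mul_one_add_sq_rpow_neg_half_atTop
  simp only [evenMoment, pow_zero, one_mul, hFTC]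
  norm_num

lemma evenMoment_zero_one : evenMoment 0 1 = π := by
  simp [evenMoment, rpow_neg_one]

lemma evenMoment_zero_two : evenMoment 0 2 = π / 2 := by
  have h := evenMoment_zero_add_one (s := 1) (by norm_num)
  norm_num [evenMoment_zero_one] at h
  linarith

lemma evenMoment_zero_three : evenMoment 0 3 = 3 * π / 8 := by
  have h := evenMoment_zero_add_one (s := 2) (by norm_num)
  norm_num [evenMoment_zero_two] at h
  linarith

lemma evenMoment_one_three : evenMoment 1 3 = π / 8 := by
  have h := evenMoment_succ_add_one (a := 0) (s := 2) (by norm_num)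
  norm_num [evenMoment_zero_two] at h
  linarith

lemma evenMoment_one_four : evenMoment 1 4 = π / 16 := by
  have h := evenMoment_succ_add_one (a := 0) (s := 3) (by norm_num)
  norm_num [evenMoment_zero_three] at h
  linarith

lemma evenMoment_two_four : evenMoment 2 4 = π / 16 := by
  have h := evenMoment_succ_add_one (a := 1) (s := 3) (by norm_num)
  norm_num [evenMoment_one_three] at h
  linarith

lemma evenMoment_two_five : evenMoment 2 5 = 3 * π / 128 := by
  have h := evenMoment_succ_add_one (a := 1) (s := 4) (by norm_num)
  norm_num [evenMoment_one_four] at h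
  linarith

lemma evenMoment_three_five : evenMoment 3 5 = 5 * π / 128 := by
  have h := evenMoment_succ_add_one (a := 2) (s := 4) (by norm_num)
  norm_num [evenMoment_two_four] at h
  linarith

lemma evenMoment_one_five_halves : evenMoment 1 (5 / 2) = 2 / 3 := by
  have h := evenMoment_succ_add_one (a := 0) (s := 3 / 2) (by norm_num)
  norm_num [evenMoment_zero_three_halves] at h
  linarith

section Anisotropic

variable {c k : ℝ}

lemma pow_mul_add_mul_sq_rpow_neg_eq (hc : 0 < c) (hk : 0 < k) (b : ℕ) (s y : ℝ) :
    (y ^ 2) ^ b * (c + k ^ 2 * y ^ 2) ^ (-s) = (√c / k) ^ (2 * b) * c ^ (-s) *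
      ((((√c / k)⁻¹ * y) ^ 2) ^ b * (1 + ((√c / k)⁻¹ * y) ^ 2) ^ (-s)) := by
  set t := (√c / k)⁻¹ * y
  have hy : y = √c / k * t := by simp only [t]; field_simp
  have hquad : c + k ^ 2 * y ^ 2 = c * (1 + t ^ 2) := by
    rw [hy, div_mul_eq_mul_div, div_pow, mul_pow, sq_sqrt hc.le]
    field_simp
  rw [hquad, mul_rpow hc.le (by positivity), hy]
  ring

lemma integral_pow_mul_add_mul_sq_rpow_neg (hc : 0 < c) (hk : 0 < k) (b : ℕ) (s : ℝ) :
    ∫ y : ℝ, (y ^ 2) ^ b * (c + k ^ 2 * y ^ 2) ^ (-s) =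
      (√c / k) ^ (2 * b + 1) * c ^ (-s) * evenMoment b s := by
  simp_rw [pow_mul_add_mul_sq_rpow_neg_eq hc hk b s]
  rw [integral_const_mul, Measure.integral_comp_inv_mul_left
    (fun t : ℝ => (t ^ 2) ^ b * (1 + t ^ 2) ^ (-s)), abs_of_pos (by positivity), smul_eq_mul,
    evenMoment]
  ring

lemma integrable_pow_mul_add_mul_sq_rpow_neg (hc : 0 < c) (hk : 0 < k) {b : ℕ} {s : ℝ}
    (h : b + 1 / 2 < s) : Integrable fun y : ℝ => (y ^ 2) ^ b * (c + k ^ 2 * y ^ 2) ^ (-s) := by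
  simp_rw [pow_mul_add_mul_sq_rpow_neg_eq hc hk b s]
  exact ((integrable_evenMoment h).comp_mul_left' (by positivity)).const_mul _

end Anisotropic

section Plane

variable {k : ℝ}

lemma integral_sq_pow_mul_sq_pow_mul_rpow_neg_slice (hk : 0 < k) (a b : ℕ) (s x : ℝ) :
    ∫ y : ℝ, (x ^ 2) ^ a * (y ^ 2) ^ b * (1 + x ^ 2 + k ^ 2 * y ^ 2) ^ (-s) =
      evenMoment b s / k ^ (2 * b + 1) * ((x ^ 2) ^ a * (1 + x ^ 2) ^ (-(s - b - 1 / 2))) := by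
  have hpos : 0 < 1 + x ^ 2 := by positivity
  simp_rw [mul_assoc ((x ^ 2) ^ a)]
  rw [integral_const_mul, integral_pow_mul_add_mul_sq_rpow_neg hpos hk, div_pow, sqrt_eq_rpow,
    ← rpow_natCast ((1 + x ^ 2) ^ (1 / 2 : ℝ)), ← rpow_mul hpos.le,
    show -(s - b - 1 / 2) = 1 / 2 * (2 * b + 1 : ℕ) + -s by push_cast; ring, rpow_add hpos]
  ring

lemma integrable_sq_pow_mul_sq_pow_mul_rpow_neg (hk : 0 < k) {a b : ℕ} {s : ℝ}
    (h : a + b + 1 < s) :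
    Integrable fun p : ℝ × ℝ =>
      (p.1 ^ 2) ^ a * (p.2 ^ 2) ^ b * (1 + p.1 ^ 2 + k ^ 2 * p.2 ^ 2) ^ (-s) := by
  rw [Measure.volume_eq_prod, integrable_prod_iff (by fun_prop)]
  constructor
  · refine .of_forall fun x => ?_
    simp_rw [mul_assoc ((x ^ 2) ^ a)]
    exact (integrable_pow_mul_add_mul_sq_rpow_neg (by positivity) hk (by linarith)).const_mul _
  · have hnorm (x y : ℝ) : ‖(x ^ 2) ^ a * (y ^ 2) ^ b * (1 + x ^ 2 + k ^ 2 * y ^ 2) ^ (-s)‖ =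
        (x ^ 2) ^ a * (y ^ 2) ^ b * (1 + x ^ 2 + k ^ 2 * y ^ 2) ^ (-s) :=
      Real.norm_of_nonneg (by positivity)
    simp_rw [hnorm, integral_sq_pow_mul_sq_pow_mul_rpow_neg_slice hk]
    exact (integrable_evenMoment (by linarith)).const_mul _

lemma integral_sq_pow_mul_sq_pow_mul_rpow_neg (hk : 0 < k) {a b : ℕ} {s : ℝ}
    (h : a + b + 1 < s) :
    ∫ p : ℝ × ℝ, (p.1 ^ 2) ^ a * (p.2 ^ 2) ^ b * (1 + p.1 ^ 2 + k ^ 2 * p.2 ^ 2) ^ (-s) =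
      evenMoment b s * evenMoment a (s - b - 1 / 2) / k ^ (2 * b + 1) := by
  have hI := integrable_sq_pow_mul_sq_pow_mul_rpow_neg hk h
  rw [Measure.volume_eq_prod] at hI ⊢
  rw [integral_prod _ hI]
  simp_rw [integral_sq_pow_mul_sq_pow_mul_rpow_neg_slice hk]
  rw [integral_const_mul, ← evenMoment]
  ring

end Plane

noncomputable def b0Monomial (k : ℝ) (a b n : ℕ) (p : ℝ × ℝ) : ℝ :=
  (p.1 ^ 2) ^ a * (p.2 ^ 2) ^ b * b0 k p.1 p.2 ^ n

lemma b0_pow_eq_rpow_neg (k x y : ℝ) (n : ℕ) :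
    b0 k x y ^ n = (1 + x ^ 2 + k ^ 2 * y ^ 2) ^ (-(n : ℝ)) := by
  rw [b0, rpow_neg (by positivity), rpow_natCast, inv_pow]

section b0Monomial

variable {k : ℝ} {a b n : ℕ}

lemma integrable_b0Monomial (hk : 0 < k) (h : a + b + 2 ≤ n) :
    Integrable (b0Monomial k a b n) := by
  have hn : (a + b + 1 : ℝ) < n := by exact_mod_cast (by omega : a + b + 1 < n)
  refine (integrable_sq_pow_mul_sq_pow_mul_rpow_neg hk hn).congr (.of_forall fun p => ?_)
  rw [b0Monomial, b0_pow_eq_rpow_neg]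

lemma integral_b0Monomial (hk : 0 < k) (h : a + b + 2 ≤ n) :
    ∫ p, b0Monomial k a b n p =
      evenMoment b n * evenMoment a (n - b - 1 / 2) / k ^ (2 * b + 1) := by
  have hn : (a + b + 1 : ℝ) < n := by exact_mod_cast (by omega : a + b + 1 < n)
  simp_rw [b0Monomial, b0_pow_eq_rpow_neg]
  exact integral_sq_pow_mul_sq_pow_mul_rpow_neg hk hn

end b0Monomial

lemma b2_symbol_eq (k d1 d2 d11 d22 : ℝ) (p : ℝ × ℝ) :
    48 * (b0 k p.1 p.2) ^ 5 * k ^ 6 * d2 ^ 2 * p.2 ^ 6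
          + 48 * (b0 k p.1 p.2) ^ 5 * k ^ 2 * d1 ^ 2 * p.1 ^ 2 * p.2 ^ 4
          - 8 * (b0 k p.1 p.2) ^ 4 * k ^ 5 * d22 * p.2 ^ 4
          - 56 * (b0 k p.1 p.2) ^ 4 * k ^ 4 * d2 ^ 2 * p.2 ^ 4
          - 8 * (b0 k p.1 p.2) ^ 4 * k ^ 2 * d1 ^ 2 * p.2 ^ 4
          - 8 * (b0 k p.1 p.2) ^ 4 * k * d11 * p.1 ^ 2 * p.2 ^ 2
          - 8 * (b0 k p.1 p.2) ^ 4 * d1 ^ 2 * p.1 ^ 2 * p.2 ^ 2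
          + 6 * (b0 k p.1 p.2) ^ 3 * k ^ 3 * d22 * p.2 ^ 2
          + 14 * (b0 k p.1 p.2) ^ 3 * k ^ 2 * d2 ^ 2 * p.2 ^ 2
          + 2 * (b0 k p.1 p.2) ^ 3 * k * d11 * p.2 ^ 2
          + (b0 k p.1 p.2) ^ 3 * d1 ^ 2 * p.2 ^ 2
          - (1 / 2) * (b0 k p.1 p.2) ^ 2 * k * d22
          - (1 / 4) * (b0 k p.1 p.2) ^ 2 * d2 ^ 2
      = 48 * k ^ 6 * d2 ^ 2 * b0Monomial k 0 3 5 p + 48 * k ^ 2 * d1 ^ 2 * b0Monomial k 1 2 5 p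
        - (8 * k ^ 5 * d22 + 56 * k ^ 4 * d2 ^ 2 + 8 * k ^ 2 * d1 ^ 2) * b0Monomial k 0 2 4 p
        - (8 * k * d11 + 8 * d1 ^ 2) * b0Monomial k 1 1 4 p
        + (6 * k ^ 3 * d22 + 14 * k ^ 2 * d2 ^ 2 + 2 * k * d11 + d1 ^ 2) * b0Monomial k 0 1 3 p
        - (k * d22 / 2 + d2 ^ 2 / 4) * b0Monomial k 0 0 2 p := by
  simp only [b0Monomial]
  ring

/-- The integral over `ℝ²` of the commutative (`θ = 0`) symbol `b₂(ξ)` equals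
`−(π/3)(δ₁k)²/k³ + (π/6)(δ₁₁k)/k²`.  Here `k > 0` and `d1 = δ₁k`, `d2 = δ₂k`,
`d11 = δ₁₁k`, `d22 = δ₂₂k` are fixed real numbers. -/
theorem commutative_b2_integral (k d1 d2 d11 d22 : ℝ) (hk : 0 < k) :
    (∫ p : ℝ × ℝ,
        (48 * (b0 k p.1 p.2) ^ 5 * k ^ 6 * d2 ^ 2 * p.2 ^ 6
          + 48 * (b0 k p.1 p.2) ^ 5 * k ^ 2 * d1 ^ 2 * p.1 ^ 2 * p.2 ^ 4
          - 8 * (b0 k p.1 p.2) ^ 4 * k ^ 5 * d22 * p.2 ^ 4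
          - 56 * (b0 k p.1 p.2) ^ 4 * k ^ 4 * d2 ^ 2 * p.2 ^ 4
          - 8 * (b0 k p.1 p.2) ^ 4 * k ^ 2 * d1 ^ 2 * p.2 ^ 4
          - 8 * (b0 k p.1 p.2) ^ 4 * k * d11 * p.1 ^ 2 * p.2 ^ 2
          - 8 * (b0 k p.1 p.2) ^ 4 * d1 ^ 2 * p.1 ^ 2 * p.2 ^ 2
          + 6 * (b0 k p.1 p.2) ^ 3 * k ^ 3 * d22 * p.2 ^ 2
          + 14 * (b0 k p.1 p.2) ^ 3 * k ^ 2 * d2 ^ 2 * p.2 ^ 2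
          + 2 * (b0 k p.1 p.2) ^ 3 * k * d11 * p.2 ^ 2
          + (b0 k p.1 p.2) ^ 3 * d1 ^ 2 * p.2 ^ 2
          - (1 / 2) * (b0 k p.1 p.2) ^ 2 * k * d22
          - (1 / 4) * (b0 k p.1 p.2) ^ 2 * d2 ^ 2))
      = -(π / 3) * d1 ^ 2 / k ^ 3 + (π / 6) * d11 / k ^ 2 := by
  have hI : ∀ a b n : ℕ, a + b + 2 ≤ n → Integrable (b0Monomial k a b n) :=
    fun _ _ _ => integrable_b0Monomial hk
  simp_rw [b2_symbol_eq]
  rw [integral_sub (by fun_prop (disch := omega)) (by fun_prop (disch := omega)),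
    integral_add (by fun_prop (disch := omega)) (by fun_prop (disch := omega)),
    integral_sub (by fun_prop (disch := omega)) (by fun_prop (disch := omega)),
    integral_sub (by fun_prop (disch := omega)) (by fun_prop (disch := omega)),
    integral_add (by fun_prop (disch := omega)) (by fun_prop (disch := omega))]
  norm_num [integral_const_mul, integral_b0Monomial hk, evenMoment_three_five,
    evenMoment_two_five, evenMoment_two_four, evenMoment_one_four, evenMoment_one_three,
    evenMoment_zero_two, evenMoment_zero_three_halves, evenMoment_one_five_halves]
  field_simp
  ring
end

section
/- With the commutative chiral symbol b_{γ2}(ξ) = −12b₀⁴k³(δ₁k)(δ₂k)iξ₂⁴ + 2b₀³k²(δ₁₂k)iξ₂² + 6b₀³k(δ₁k)(δ₂k)iξ₂² − (1/2)b₀²(δ₁₂k)i, where b₀ = (1+ξ₁²+k²ξ₂²)⁻¹, the integral ∫_{ℝ²} b_{γ2}(ξ) dξ₁dξ₂ = 0. -/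
open Real MeasureTheory

/-!
For fixed `ξ₁`, the symbol is the `ξ₂`-derivative of
`2k(δ₁k)(δ₂k) b₀³ ξ₂³ − ½(δ₁₂k) b₀² ξ₂`, which tends to `0` as `|ξ₂| → ∞` because
`ξ₂ b₀ → 0` and `b₀ → 0`; hence every inner integral vanishes. Fubini applies since, with
`x = k²ξ₂²b₀ ∈ [0, 1]`, the symbol is `b₀²` times a bounded quadratic in `x`, and
`b₀² ≤ (1 + ξ₁²)⁻¹ (1 + k²ξ₂²)⁻¹` is integrable on `ℝ²`.
-/

open Filter Topology

theorem integral_eq_zero_of_hasDerivAt_snd {E : Type*} [NormedAddCommGroup E]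
    [NormedSpace ℝ E] [CompleteSpace E] {f : ℝ × ℝ → E} {G : ℝ → ℝ → E}
    (hf : Integrable f) (hG : ∀ x y, HasDerivAt (G x) (f (x, y)) y)
    (hG_lim : ∀ x, Tendsto (G x) (cocompact ℝ) (𝓝 0)) :
    ∫ p, f p = 0 := by
  rw [Measure.volume_eq_prod] at hf ⊢
  rw [integral_prod f hf]
  refine integral_eq_zero_of_ae ?_
  filter_upwards [hf.prod_right_ae] with x hx
  simpa using integral_of_hasDerivAt_of_tendsto (hG x) hx
    ((hG_lim x).mono_left atBot_le_cocompact) ((hG_lim x).mono_left atTop_le_cocompact)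

lemma abs_quadratic_le {a b c x : ℝ} (hx : |x| ≤ 1) :
    |a * x ^ 2 + b * x + c| ≤ |a| + |b| + |c| := by
  have hx2 : |x ^ 2| ≤ 1 := by rw [abs_pow]; exact pow_le_one₀ (abs_nonneg x) hx
  calc |a * x ^ 2 + b * x + c| ≤ |a| * |x ^ 2| + |b| * |x| + |c| := by
        rw [← abs_mul, ← abs_mul]; exact abs_add_three _ _ _
    _ ≤ |a| * 1 + |b| * 1 + |c| := by gcongr
    _ = |a| + |b| + |c| := by ring

lemma b0_pos (k ξ1 ξ2 : ℝ) : 0 < b0 k ξ1 ξ2 := by unfold b0; positivity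

lemma continuous_b0 (k : ℝ) : Continuous fun p : ℝ × ℝ => b0 k p.1 p.2 :=
  Continuous.inv₀ (by fun_prop) fun p => by positivity

lemma sq_mul_b0_le_one (k ξ1 ξ2 : ℝ) : k ^ 2 * ξ2 ^ 2 * b0 k ξ1 ξ2 ≤ 1 := by
  rw [b0, ← div_eq_mul_inv, div_le_one (by positivity)]
  nlinarith [sq_nonneg ξ1]

lemma hasDerivAt_b0 (k ξ1 y : ℝ) :
    HasDerivAt (b0 k ξ1) (-2 * k ^ 2 * y * b0 k ξ1 y ^ 2) y := by
  have hu : HasDerivAt (fun y => 1 + ξ1 ^ 2 + k ^ 2 * y ^ 2) (k ^ 2 * (2 * y)) y := by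
    simpa using ((hasDerivAt_pow 2 y).const_mul (k ^ 2)).const_add (1 + ξ1 ^ 2)
  refine (hu.fun_inv (by positivity)).congr_deriv ?_
  rw [b0, inv_pow, div_eq_mul_inv]
  ring

lemma tendsto_b0_cocompact {k : ℝ} (hk : k ≠ 0) (ξ1 : ℝ) :
    Tendsto (b0 k ξ1) (cocompact ℝ) (𝓝 0) := by
  have hsq : Tendsto (fun y : ℝ => y ^ 2) (cocompact ℝ) atTop := by
    simpa [Function.comp_def, sq_abs] using
      (tendsto_pow_atTop two_ne_zero).comp (tendsto_norm_cocompact_atTop (E := ℝ))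
  exact tendsto_inv_atTop_zero.comp
    (tendsto_atTop_add_const_left _ _ (hsq.const_mul_atTop (by positivity)))

lemma tendsto_mul_b0_cocompact {k : ℝ} (hk : k ≠ 0) (ξ1 : ℝ) :
    Tendsto (fun y => y * b0 k ξ1 y) (cocompact ℝ) (𝓝 0) := by
  refine squeeze_zero_norm (a := fun y => (k ^ 2)⁻¹ * ‖y‖⁻¹) (fun y => ?_) ?_
  · rcases eq_or_ne y 0 with rfl | hy
    · simp
    calc ‖y * b0 k ξ1 y‖ = k ^ 2 * y ^ 2 * b0 k ξ1 y * ((k ^ 2)⁻¹ * ‖y‖⁻¹) := by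
          rw [norm_mul, Real.norm_of_nonneg (b0_pos k ξ1 y).le, Real.norm_eq_abs]
          field_simp
          rw [sq_abs]
          ring
      _ ≤ 1 * ((k ^ 2)⁻¹ * ‖y‖⁻¹) := by gcongr; exact sq_mul_b0_le_one k ξ1 y
      _ = (k ^ 2)⁻¹ * ‖y‖⁻¹ := one_mul _
  · simpa using
      ((tendsto_norm_cocompact_atTop (E := ℝ)).inv_tendsto_atTop).const_mul (k ^ 2)⁻¹

lemma b0_sq_le (k ξ1 ξ2 : ℝ) :
    b0 k ξ1 ξ2 ^ 2 ≤ (1 + ξ1 ^ 2)⁻¹ * (1 + (k * ξ2) ^ 2)⁻¹ := by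
  rw [b0, inv_pow, ← mul_inv]
  gcongr
  nlinarith [sq_nonneg ξ1, sq_nonneg (k * ξ2), mul_nonneg (sq_nonneg ξ1) (sq_nonneg (k * ξ2))]

lemma integrable_b0_sq {k : ℝ} (hk : k ≠ 0) :
    Integrable fun p : ℝ × ℝ => b0 k p.1 p.2 ^ 2 := by
  have hprod : Integrable fun p : ℝ × ℝ => (1 + p.1 ^ 2)⁻¹ * (1 + (k * p.2) ^ 2)⁻¹ := by
    rw [Measure.volume_eq_prod]
    exact integrable_inv_one_add_sq.mul_prod (integrable_inv_one_add_sq.comp_mul_left' hk)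
  refine hprod.mono' ((continuous_b0 k).pow 2).aestronglyMeasurable (ae_of_all _ fun p => ?_)
  rw [Real.norm_of_nonneg (by positivity)]
  exact b0_sq_le k p.1 p.2

noncomputable def chiralSymbol (k d1 d2 d12 : ℝ) (p : ℝ × ℝ) : ℝ :=
  -12 * (b0 k p.1 p.2) ^ 4 * k ^ 3 * d1 * d2 * p.2 ^ 4
    + 2 * (b0 k p.1 p.2) ^ 3 * k ^ 2 * d12 * p.2 ^ 2
    + 6 * (b0 k p.1 p.2) ^ 3 * k * d1 * d2 * p.2 ^ 2
    - (1 / 2) * (b0 k p.1 p.2) ^ 2 * d12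

noncomputable def chiralPrimitive (k d1 d2 d12 ξ1 y : ℝ) : ℝ :=
  2 * k * d1 * d2 * (b0 k ξ1 y ^ 3 * y ^ 3) - 1 / 2 * d12 * (b0 k ξ1 y ^ 2 * y)

lemma hasDerivAt_chiralPrimitive (k d1 d2 d12 ξ1 y : ℝ) :
    HasDerivAt (chiralPrimitive k d1 d2 d12 ξ1) (chiralSymbol k d1 d2 d12 (ξ1, y)) y := by
  have hb := hasDerivAt_b0 k ξ1 y
  have h := (((hb.fun_pow 3).fun_mul (hasDerivAt_pow 3 y)).const_mul (2 * k * d1 * d2)).fun_sub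
    (((hb.fun_pow 2).fun_mul (hasDerivAt_id' y)).const_mul (1 / 2 * d12))
  refine h.congr_deriv ?_
  simp only [chiralSymbol, Nat.cast_ofNat]
  ring

lemma tendsto_chiralPrimitive_cocompact {k : ℝ} (hk : k ≠ 0) (d1 d2 d12 ξ1 : ℝ) :
    Tendsto (chiralPrimitive k d1 d2 d12 ξ1) (cocompact ℝ) (𝓝 0) := by
  have hyb := tendsto_mul_b0_cocompact hk ξ1
  have h := ((hyb.pow 3).const_mul (2 * k * d1 * d2)).sub
    ((hyb.mul (tendsto_b0_cocompact hk ξ1)).const_mul (1 / 2 * d12))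
  convert h using 1
  · ext y; simp only [chiralPrimitive]; ring
  · norm_num

lemma chiralSymbol_eq {k : ℝ} (hk : k ≠ 0) (d1 d2 d12 : ℝ) (p : ℝ × ℝ) :
    chiralSymbol k d1 d2 d12 p = b0 k p.1 p.2 ^ 2 *
      (-12 * d1 * d2 / k * (k ^ 2 * p.2 ^ 2 * b0 k p.1 p.2) ^ 2
        + (2 * d12 + 6 * d1 * d2 / k) * (k ^ 2 * p.2 ^ 2 * b0 k p.1 p.2) - d12 / 2) := by
  simp only [chiralSymbol]
  field_simp
  ring

lemma abs_chiralSymbol_le {k : ℝ} (hk : k ≠ 0) (d1 d2 d12 : ℝ) (p : ℝ × ℝ) :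
    |chiralSymbol k d1 d2 d12 p| ≤
      (|-12 * d1 * d2 / k| + |2 * d12 + 6 * d1 * d2 / k| + |-(d12 / 2)|) * b0 k p.1 p.2 ^ 2 := by
  have hx : |k ^ 2 * p.2 ^ 2 * b0 k p.1 p.2| ≤ 1 := by
    rw [abs_of_nonneg (by have := b0_pos k p.1 p.2; positivity)]
    exact sq_mul_b0_le_one k p.1 p.2
  rw [chiralSymbol_eq hk, abs_mul, abs_of_nonneg (sq_nonneg _), mul_comm, sub_eq_add_neg]
  gcongr
  exact abs_quadratic_le hx

lemma integrable_chiralSymbol {k : ℝ} (hk : k ≠ 0) (d1 d2 d12 : ℝ) :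
    Integrable (chiralSymbol k d1 d2 d12) := by
  refine ((integrable_b0_sq hk).const_mul _).mono' ?_
    (ae_of_all _ fun p => abs_chiralSymbol_le hk d1 d2 d12 p)
  have := continuous_b0 k
  unfold chiralSymbol
  fun_prop

/-- The integral over `ℝ²` of the commutative chiral symbol
`b_{γ2}(ξ) = −12b₀⁴k³(δ₁k)(δ₂k)iξ₂⁴ + 2b₀³k²(δ₁₂k)iξ₂² + 6b₀³k(δ₁k)(δ₂k)iξ₂²
− (1/2)b₀²(δ₁₂k)i` vanishes.  Here `k > 0` and `d1 = δ₁k`, `d2 = δ₂k`,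
`d12 = δ₁₂k` are fixed real numbers, and the integrand is `ℂ`-valued. -/
theorem commutative_chiral_integral (k d1 d2 d12 : ℝ) (hk : 0 < k) :
    (∫ p : ℝ × ℝ,
        ((-12 * (b0 k p.1 p.2) ^ 4 * k ^ 3 * d1 * d2 * p.2 ^ 4
            + 2 * (b0 k p.1 p.2) ^ 3 * k ^ 2 * d12 * p.2 ^ 2
            + 6 * (b0 k p.1 p.2) ^ 3 * k * d1 * d2 * p.2 ^ 2
            - (1 / 2) * (b0 k p.1 p.2) ^ 2 * d12 : ℝ) : ℂ) * Complex.I)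
      = 0 := by
  have h : ∫ p, chiralSymbol k d1 d2 d12 p = 0 :=
    integral_eq_zero_of_hasDerivAt_snd (integrable_chiralSymbol hk.ne' d1 d2 d12)
      (hasDerivAt_chiralPrimitive k d1 d2 d12)
      (tendsto_chiralPrimitive_cocompact hk.ne' d1 d2 d12)
  change ∫ p, (chiralSymbol k d1 d2 d12 p : ℂ) * Complex.I = 0
  rw [integral_mul_const, integral_complex_ofReal, h, Complex.ofReal_zero, zero_mul]
end

section
/- For m₁, m₂ ≥ 1 with m₁ + m₂ ≥ 3 and nonnegative integers k₁, k₂ with 2k₁ + 2k₂ + 2 < 2(m₁+m₂) − 1, the integral ∫₀^∞∫₀^∞ v^{2k₁} u^{k₂−1/2} (1+v²+u)^{−m₁}(1+v²+us²)^{−m₂} du dv converges for every s > 0 and defines a real-analytic function of s on (0,∞). -/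
/-!
On the quadrant `v, u > 0` the integrand is dominated by a constant times
`v^{2k₁} u^{k₂-1/2} (1+v²+u)^{-(m₁+m₂)}`, which is integrable: the inequality
`(1+v²)^{k₁+1} (1+u)^n ≤ (1+v²+u)^{k₁+1+n}` bounds it by a product of two one-variable
Beta-type integrals. For analyticity, replace `s²` by a complex `w` with `Re w > 0`. Since
`|1+v²+uw| ≥ min(1, Re w)(1+v²+u)`, the same majorant dominates the integrand and its
`w`-derivative locally uniformly, so the integral is holomorphic in `w`. The original function is
the real part of its restriction to `w = s²`.
-/

open Real MeasureTheory Set Filter Topology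

theorem integrableOn_Ioi_of_norm_le_rpow {E : Type*} [NormedAddCommGroup E] {f : ℝ → E}
    {a b : ℝ} (ha : -1 < a) (hb : b < -1) (hf : ContinuousOn f (Ioi 0))
    (h₀ : ∀ x ∈ Ioc (0 : ℝ) 1, ‖f x‖ ≤ x ^ a) (h₁ : ∀ x ∈ Ioi (1 : ℝ), ‖f x‖ ≤ x ^ b) :
    IntegrableOn f (Ioi 0) := by
  rw [← Ioc_union_Ioi_eq_Ioi zero_le_one]
  refine IntegrableOn.union ?_ ?_
  · have hpow : IntegrableOn (fun x : ℝ => x ^ a) (Ioc 0 1) :=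
      (intervalIntegrable_iff_integrableOn_Ioc_of_le zero_le_one).1
        (intervalIntegral.intervalIntegrable_rpow' ha)
    exact hpow.mono' ((hf.mono Ioc_subset_Ioi_self).aestronglyMeasurable measurableSet_Ioc)
      (ae_restrict_of_forall_mem measurableSet_Ioc h₀)
  · exact (integrableOn_Ioi_rpow_of_lt hb zero_lt_one).mono'
      ((hf.mono (Ioi_subset_Ioi zero_le_one)).aestronglyMeasurable measurableSet_Ioi)
      (ae_restrict_of_forall_mem measurableSet_Ioi h₁)

theorem integrableOn_Ioi_rpow_div_one_add_rpow_rpow {a b p : ℝ} (hp : 0 < p) (ha : -1 < a)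
    (hab : a < p * b - 1) :
    IntegrableOn (fun x : ℝ => x ^ a / (1 + x ^ p) ^ b) (Ioi 0) := by
  have hb : 0 ≤ b := by
    by_contra! hb
    nlinarith
  refine integrableOn_Ioi_of_norm_le_rpow ha (show a - p * b < -1 by linarith) ?_ ?_ ?_
  · refine fun x (hx : 0 < x) => ContinuousAt.continuousWithinAt ?_
    fun_prop (disch := first | positivity | exact Or.inl hx.ne' | exact Or.inr hb)
  · intro x hx
    have hx0 : 0 < x := hx.1
    rw [norm_of_nonneg (by positivity)]
    exact div_le_self (by positivity) (one_le_rpow (by linarith [rpow_nonneg hx0.le p]) hb)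
  · intro x hx
    have hx0 : (0 : ℝ) < x := zero_lt_one.trans hx
    rw [norm_of_nonneg (by positivity), rpow_sub hx0, rpow_mul hx0.le]
    exact div_le_div_of_nonneg_left (by positivity) (by positivity)
      (rpow_le_rpow (by positivity) (by linarith) hb)

theorem one_add_sq_pow_mul_one_add_pow_le {v u : ℝ} (hu : 0 ≤ u) (j n : ℕ) :
    (1 + v ^ 2) ^ j * (1 + u) ^ n ≤ (1 + v ^ 2 + u) ^ (j + n) := by
  rw [pow_add]
  have hv : 0 ≤ v ^ 2 := sq_nonneg v
  exact mul_le_mul (pow_le_pow_left₀ (by positivity) (by linarith) _)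
    (pow_le_pow_left₀ (by positivity) (by linarith) _) (by positivity) (by positivity)

theorem integrableOn_pow_mul_rpow_mul_zpow_neg (k1 k2 M : ℕ) (hM : k1 + k2 + 2 ≤ M) :
    IntegrableOn (fun p : ℝ × ℝ => p.1 ^ (2 * k1) * p.2 ^ ((k2 : ℝ) - 1 / 2) *
      (1 + p.1 ^ 2 + p.2) ^ (-(M : ℤ))) (Ioi 0 ×ˢ Ioi 0) := by
  obtain ⟨n, rfl⟩ : ∃ n, M = k1 + 1 + n := ⟨M - (k1 + 1), by omega⟩
  have hv : IntegrableOn (fun v : ℝ => v ^ (2 * k1) / (1 + v ^ 2) ^ (k1 + 1)) (Ioi 0) := by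
    have := integrableOn_Ioi_rpow_div_one_add_rpow_rpow (a := 2 * k1) (b := k1 + 1)
      two_pos (by linarith [Nat.cast_nonneg (α := ℝ) k1]) (by linarith)
    exact_mod_cast this
  have hu : IntegrableOn (fun u : ℝ => u ^ ((k2 : ℝ) - 1 / 2) / (1 + u) ^ n) (Ioi 0) := by
    have := integrableOn_Ioi_rpow_div_one_add_rpow_rpow (a := k2 - 1 / 2) (b := n)
      one_pos (by linarith [Nat.cast_nonneg (α := ℝ) k2])
      (by have : (k2 : ℝ) + 1 ≤ n := by exact_mod_cast (by omega : k2 + 1 ≤ n)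
          linarith)
    simpa only [rpow_one, rpow_natCast] using this
  have hprod := hv.mul_prod hu
  rw [Measure.prod_restrict, ← Measure.volume_eq_prod] at hprod
  refine hprod.mono' (by fun_prop : Measurable _).aestronglyMeasurable.restrict ?_
  filter_upwards [ae_restrict_mem (measurableSet_Ioi.prod measurableSet_Ioi)] with p ⟨hv, hu⟩
  simp only [mem_Ioi] at hv hu
  rw [norm_of_nonneg (by positivity), zpow_neg, zpow_natCast, ← div_eq_mul_inv, div_mul_div_comm]
  exact div_le_div_of_nonneg_left (by positivity) (by positivity)
    (one_add_sq_pow_mul_one_add_pow_le hu.le _ _)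

theorem Complex.min_one_re_mul_le_norm_ofReal_add_mul {A B : ℝ} (hA : 0 ≤ A) (hB : 0 ≤ B)
    (w : ℂ) : min 1 w.re * (A + B) ≤ ‖(A : ℂ) + B * w‖ := by
  have hre : ((A : ℂ) + B * w).re = A + B * w.re := by simp
  have h1 : min 1 w.re * A ≤ A := mul_le_of_le_one_left hA (min_le_left _ _)
  have h2 : min 1 w.re * B ≤ B * w.re := by nlinarith [min_le_right 1 w.re]
  linarith [Complex.re_le_norm ((A : ℂ) + B * w)]

theorem norm_ofReal_add_mul_zpow_neg_le {A B δ : ℝ} (hA : 0 < A) (hB : 0 ≤ B) (hδ : 0 < δ)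
    {w : ℂ} (hw : δ ≤ w.re) (n : ℕ) :
    ‖((A : ℂ) + B * w) ^ (-(n : ℤ))‖ ≤ (min 1 δ * (A + B)) ^ (-(n : ℤ)) := by
  have hmin : min 1 δ ≤ min 1 w.re := min_le_min_left 1 hw
  have hpos : 0 < min 1 δ * (A + B) := mul_pos (lt_min one_pos hδ) (by linarith)
  rw [norm_zpow, zpow_neg, zpow_neg, zpow_natCast, zpow_natCast]
  refine inv_anti₀ (pow_pos hpos n) (pow_le_pow_left₀ hpos.le ?_ n)
  calc min 1 δ * (A + B) ≤ min 1 w.re * (A + B) := by gcongr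
    _ ≤ ‖(A : ℂ) + B * w‖ := Complex.min_one_re_mul_le_norm_ofReal_add_mul hA.le hB w

theorem hasDerivAt_ofReal_add_mul_zpow_neg {A B : ℝ} {w : ℂ} (hw : (A : ℂ) + B * w ≠ 0)
    (m : ℕ) :
    HasDerivAt (fun z : ℂ => ((A : ℂ) + B * z) ^ (-(m : ℤ)))
      (-(m : ℂ) * ((A : ℂ) + B * w) ^ (-((m + 1 : ℕ) : ℤ)) * B) w := by
  have hlin : HasDerivAt (fun z : ℂ => (A : ℂ) + B * z) B w := by
    simpa using ((hasDerivAt_id w).const_mul (B : ℂ)).const_add (A : ℂ)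
  have h := (hasDerivAt_zpow (-(m : ℤ)) _ (Or.inl hw)).comp w hlin
  rw [show -((m + 1 : ℕ) : ℤ) = -(m : ℤ) - 1 by push_cast; ring]
  exact h.congr_deriv (by push_cast; ring)

theorem mul_add_zpow_neg_succ_le {A B : ℝ} (hA : 0 < A) (hB : 0 ≤ B) (m : ℕ) :
    B * (A + B) ^ (-((m + 1 : ℕ) : ℤ)) ≤ (A + B) ^ (-(m : ℤ)) := by
  have hAB : 0 < A + B := by linarith
  rw [zpow_neg, zpow_neg, zpow_natCast, zpow_natCast, pow_succ, mul_inv, ← mul_assoc,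
    mul_comm B, mul_assoc]
  exact mul_le_of_le_one_right (by positivity)
    (by rw [← div_eq_mul_inv, div_le_one hAB]; linarith)

section ParametricIntegral

variable {α : Type*} [MeasurableSpace α] {μ : Measure α} {f a b : α → ℝ} {m : ℕ}

theorem integrable_ofReal_mul_ofReal_add_mul_zpow_neg (hf : AEMeasurable f μ)
    (ha : AEMeasurable a μ) (hb : AEMeasurable b μ) (hab : ∀ᵐ x ∂μ, 0 < a x ∧ 0 ≤ b x)
    (hint : Integrable (fun x => f x * (a x + b x) ^ (-(m : ℤ))) μ) {w : ℂ} (hw : 0 < w.re) :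
    Integrable (fun x => (f x : ℂ) * ((a x : ℂ) + b x * w) ^ (-(m : ℤ))) μ := by
  refine (hint.norm.const_mul (min 1 w.re ^ (-(m : ℤ)))).mono' (by fun_prop) ?_
  filter_upwards [hab] with x ⟨hax, hbx⟩
  rw [norm_mul, Complex.norm_real, norm_mul,
    norm_of_nonneg (r := (a x + b x) ^ _) (by positivity)]
  calc ‖f x‖ * ‖((a x : ℂ) + b x * w) ^ (-(m : ℤ))‖
      ≤ ‖f x‖ * (min 1 w.re * (a x + b x)) ^ (-(m : ℤ)) :=
        mul_le_mul_of_nonneg_left (norm_ofReal_add_mul_zpow_neg_le hax hbx hw le_rfl m)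
          (norm_nonneg _)
    _ = min 1 w.re ^ (-(m : ℤ)) * (‖f x‖ * (a x + b x) ^ (-(m : ℤ))) := by
        rw [mul_zpow]; ring

theorem differentiableOn_integral_ofReal_mul_ofReal_add_mul_zpow_neg (hf : AEMeasurable f μ)
    (ha : AEMeasurable a μ) (hb : AEMeasurable b μ) (hab : ∀ᵐ x ∂μ, 0 < a x ∧ 0 ≤ b x)
    (hint : Integrable (fun x => f x * (a x + b x) ^ (-(m : ℤ))) μ) :
    DifferentiableOn ℂ
      (fun w : ℂ => ∫ x, (f x : ℂ) * ((a x : ℂ) + b x * w) ^ (-(m : ℤ)) ∂μ) {w | 0 < w.re} := by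
  intro w₀ hw₀
  set δ := w₀.re / 2
  have hδ : 0 < δ := half_pos hw₀
  have hnhds : {w : ℂ | δ < w.re} ∈ 𝓝 w₀ :=
    (isOpen_lt continuous_const Complex.continuous_re).mem_nhds
      (show δ < w₀.re from half_lt_self hw₀)
  have hne : ∀ᵐ x ∂μ, ∀ w ∈ {w : ℂ | δ < w.re}, (a x : ℂ) + b x * w ≠ 0 := by
    filter_upwards [hab] with x ⟨hax, hbx⟩ w (hw : δ < w.re) h
    have hre := congrArg Complex.re h
    simp only [Complex.add_re, Complex.ofReal_re, Complex.re_ofReal_mul, Complex.zero_re] at hre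
    nlinarith [mul_nonneg hbx (hδ.trans hw).le]
  set C := (m : ℝ) * min 1 δ ^ (-((m + 1 : ℕ) : ℤ))
  have key := hasDerivAt_integral_of_dominated_loc_of_deriv_le hnhds
    (F := fun w x => (f x : ℂ) * ((a x : ℂ) + b x * w) ^ (-(m : ℤ)))
    (F' := fun w x =>
      (f x : ℂ) * (-(m : ℂ) * ((a x : ℂ) + b x * w) ^ (-((m + 1 : ℕ) : ℤ)) * b x))
    (bound := fun x => C * ‖f x * (a x + b x) ^ (-(m : ℤ))‖)
    (Eventually.of_forall fun w => by fun_prop)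
    (integrable_ofReal_mul_ofReal_add_mul_zpow_neg hf ha hb hab hint hw₀)
    (by fun_prop) ?_ (hint.norm.const_mul _) ?_
  · exact key.2.differentiableAt.differentiableWithinAt
  · filter_upwards [hab] with x ⟨hax, hbx⟩ w (hw : δ < w.re)
    have hz := norm_ofReal_add_mul_zpow_neg_le hax hbx hδ hw.le (m + 1)
    rw [norm_mul, norm_mul, norm_mul, norm_neg, Complex.norm_real, Complex.norm_real,
      Complex.norm_natCast, norm_mul, norm_of_nonneg hbx,
      norm_of_nonneg (r := (a x + b x) ^ _) (by positivity)]
    calc ‖f x‖ * (m * ‖((a x : ℂ) + b x * w) ^ (-((m + 1 : ℕ) : ℤ))‖ * b x)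
        ≤ ‖f x‖ * (m * (min 1 δ * (a x + b x)) ^ (-((m + 1 : ℕ) : ℤ)) * b x) := by gcongr
      _ = C * ‖f x‖ * (b x * (a x + b x) ^ (-((m + 1 : ℕ) : ℤ))) := by
        rw [mul_zpow]; ring
      _ ≤ C * ‖f x‖ * (a x + b x) ^ (-(m : ℤ)) := by
        gcongr
        exact mul_add_zpow_neg_succ_le hax hbx m
      _ = C * (‖f x‖ * (a x + b x) ^ (-(m : ℤ))) := by ring
  · filter_upwards [hne] with x hx w hw
    exact (hasDerivAt_ofReal_add_mul_zpow_neg (hx w hw) m).const_mul _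

theorem integrable_mul_add_mul_zpow_neg (hf : AEMeasurable f μ) (ha : AEMeasurable a μ)
    (hb : AEMeasurable b μ) (hab : ∀ᵐ x ∂μ, 0 < a x ∧ 0 ≤ b x)
    (hint : Integrable (fun x => f x * (a x + b x) ^ (-(m : ℤ))) μ) {t : ℝ} (ht : 0 < t) :
    Integrable (fun x => f x * (a x + b x * t) ^ (-(m : ℤ))) μ := by
  have h := integrable_ofReal_mul_ofReal_add_mul_zpow_neg hf ha hb hab hint
    (show 0 < (t : ℂ).re from ht)
  simpa only [← Complex.ofReal_mul, ← Complex.ofReal_add, ← Complex.ofReal_zpow,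
    RCLike.re_to_complex, Complex.ofReal_re] using h.re

theorem analyticOnNhd_integral_mul_add_mul_zpow_neg (hf : AEMeasurable f μ)
    (ha : AEMeasurable a μ) (hb : AEMeasurable b μ) (hab : ∀ᵐ x ∂μ, 0 < a x ∧ 0 ≤ b x)
    (hint : Integrable (fun x => f x * (a x + b x) ^ (-(m : ℤ))) μ) :
    AnalyticOnNhd ℝ (fun t : ℝ => ∫ x, f x * (a x + b x * t) ^ (-(m : ℤ)) ∂μ) (Ioi 0) := by
  intro t (ht : 0 < t)
  have hH := differentiableOn_integral_ofReal_mul_ofReal_add_mul_zpow_neg hf ha hb hab hint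
  have hre := (hH.analyticAt ((isOpen_lt continuous_const Complex.continuous_re).mem_nhds
    (show 0 < (t : ℂ).re from ht))).re_ofReal
  simpa only [← Complex.ofReal_mul, ← Complex.ofReal_add, ← Complex.ofReal_zpow,
    integral_complex_ofReal, Complex.ofReal_re] using hre

end ParametricIntegral

theorem rearrangement_integral_convergence_general (m1 m2 k1 k2 : ℕ)
    (hk : 2 * k1 + 2 * k2 + 2 < 2 * (m1 + m2) - 1) :
    (∀ s : ℝ, 0 < s →
      IntegrableOn
        (fun p : ℝ × ℝ => p.1 ^ (2 * k1) * p.2 ^ ((k2 : ℝ) - 1 / 2) *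
          (1 + p.1 ^ 2 + p.2) ^ (-(m1 : ℤ)) *
          (1 + p.1 ^ 2 + p.2 * s ^ 2) ^ (-(m2 : ℤ)))
        (Set.Ioi 0 ×ˢ Set.Ioi 0)) ∧
    AnalyticOn ℝ
      (fun s : ℝ => ∫ p in Set.Ioi (0:ℝ) ×ˢ Set.Ioi (0:ℝ),
        p.1 ^ (2 * k1) * p.2 ^ ((k2 : ℝ) - 1 / 2) *
          (1 + p.1 ^ 2 + p.2) ^ (-(m1 : ℤ)) *
          (1 + p.1 ^ 2 + p.2 * s ^ 2) ^ (-(m2 : ℤ)))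
      (Set.Ioi 0) := by
  set Q : Set (ℝ × ℝ) := Ioi 0 ×ˢ Ioi 0
  have hf : Measurable fun p : ℝ × ℝ =>
      p.1 ^ (2 * k1) * p.2 ^ ((k2 : ℝ) - 1 / 2) * (1 + p.1 ^ 2 + p.2) ^ (-(m1 : ℤ)) := by
    fun_prop
  have hpos : ∀ᵐ p ∂volume.restrict Q, 0 < 1 + p.1 ^ 2 ∧ 0 ≤ p.2 :=
    ae_restrict_of_forall_mem (measurableSet_Ioi.prod measurableSet_Ioi)
      fun p hp => ⟨by positivity, le_of_lt hp.2⟩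
  have hint : IntegrableOn (fun p : ℝ × ℝ => p.1 ^ (2 * k1) * p.2 ^ ((k2 : ℝ) - 1 / 2) *
      (1 + p.1 ^ 2 + p.2) ^ (-(m1 : ℤ)) * (1 + p.1 ^ 2 + p.2) ^ (-(m2 : ℤ))) Q := by
    refine (integrableOn_pow_mul_rpow_mul_zpow_neg k1 k2 (m1 + m2) (by omega)).congr_fun
      (fun p ⟨_, (hu : 0 < p.2)⟩ => ?_) (measurableSet_Ioi.prod measurableSet_Ioi)
    rw [mul_assoc _ ((1 + p.1 ^ 2 + p.2) ^ _), ← zpow_add₀ (by positivity)]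
    push_cast
    ring_nf
  refine ⟨fun s hs => integrable_mul_add_mul_zpow_neg hf.aemeasurable (by fun_prop)
    (by fun_prop) hpos hint (by positivity), ?_⟩
  have hsq : AnalyticOnNhd ℝ (fun s : ℝ => s ^ 2) (Ioi 0) := fun s _ => by fun_prop
  exact ((analyticOnNhd_integral_mul_add_mul_zpow_neg hf.aemeasurable (by fun_prop)
    (by fun_prop) hpos hint).comp hsq fun s (hs : 0 < s) => pow_pos hs 2).analyticOn

/-- Convergence and analyticity underlying the two-variable rearrangement lemma:
for `m₁, m₂ ≥ 1` with `m₁ + m₂ ≥ 3` and `2k₁ + 2k₂ + 2 < 2(m₁+m₂) − 1`, the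
integral `∫₀^∞∫₀^∞ v^{2k₁} u^{k₂−1/2} (1+v²+u)^{−m₁} (1+v²+us²)^{−m₂} du dv`
converges for every `s > 0` and defines a real-analytic function of `s` on
`(0,∞)`. -/
theorem rearrangement_integral_convergence (m1 m2 k1 k2 : ℕ)
    (hm1 : 1 ≤ m1) (hm2 : 1 ≤ m2) (hm : 3 ≤ m1 + m2)
    (hk : 2 * k1 + 2 * k2 + 2 < 2 * (m1 + m2) - 1) :
    (∀ s : ℝ, 0 < s →
      IntegrableOn
        (fun p : ℝ × ℝ => p.1 ^ (2 * k1) * p.2 ^ ((k2 : ℝ) - 1 / 2) *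
          (1 + p.1 ^ 2 + p.2) ^ (-(m1 : ℤ)) *
          (1 + p.1 ^ 2 + p.2 * s ^ 2) ^ (-(m2 : ℤ)))
        (Set.Ioi 0 ×ˢ Set.Ioi 0)) ∧
    AnalyticOn ℝ
      (fun s : ℝ => ∫ p in Set.Ioi (0:ℝ) ×ˢ Set.Ioi (0:ℝ),
        p.1 ^ (2 * k1) * p.2 ^ ((k2 : ℝ) - 1 / 2) *
          (1 + p.1 ^ 2 + p.2) ^ (-(m1 : ℤ)) *
          (1 + p.1 ^ 2 + p.2 * s ^ 2) ^ (-(m2 : ℤ)))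
      (Set.Ioi 0) :=
  rearrangement_integral_convergence_general m1 m2 k1 k2 hk
end
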